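/- Let g be CN-war-stable with equal strengths and γ ≥ 1, let i have maximum degree d_i and ij ∈ g. If C is a clique of g − ij with i ∉ C and |C| > γ·(1 + |N_i(g−ij)\C|), then C ⊆ N_i(g), |C| = ⌈γ·d_i/(1+γ)⌉, and |C| > γ·d_i/(1+γ). Moreover, for any clique C of g with i ∉ C, |C ∩ N_i(g)| ≤ ⌈γ·d_i/(1+γ)⌉. -/

import Mathlib

/-!
Deleting `ij` removes at most one ally of `i`, so the attack by `C` on `i` in `g - ij` gives
`γ·|N_i(g) \ C| < |C|`. If some `k ∈ C` were not an ally of `i`, add the link `ik`: when `k` is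
the only member of `C` outside `N_i(g)`, an ally `u ∈ C` of `i` is attacked by `(C \ {u}) ∪ {i}`;
otherwise a second non-ally `v ∈ C` is attacked by `{i, k} ∪ (C ∩ N_i(g))`. Since `d_i` is
maximal (and, in the second case, by (S1) at `v` against `C \ {v}`), either attack contradicts
(S2). Once `C ⊆ N_i(g)`, the strict inequality and (S1) at `i`, `|C| ≤ γ·(1 + d_i - |C|)`, pin
`|C|` to `⌈γ·d_i/(1+γ)⌉`; (S1) at `i` against `C' ∩ N_i(g)` gives the last bound.
-/

open Finset

/-- The allies (neighbors) of `i` in network `g`, as a `Finset`. -/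
noncomputable def nbrs {V : Type*} [Fintype V] (g : SimpleGraph V) (i : V) : Finset V :=
  @Finset.filter _ (fun j => g.Adj i j) (Classical.decPred _) Finset.univ

/-- The network `g` with the alliance `jk` added. -/
def addE {V : Type*} (g : SimpleGraph V) (j k : V) : SimpleGraph V :=
  g ⊔ SimpleGraph.fromEdgeSet {s(j, k)}

/-- The network `g` with the alliance `jk` deleted. -/
def delE {V : Type*} (g : SimpleGraph V) (j k : V) : SimpleGraph V :=
  g.deleteEdges {s(j, k)}

/-- CN-vulnerability with uniform strengths `M C = |C|` and constant `γ`: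
country `i` is CN-vulnerable at `g` if some clique `C` of `g` not containing `i`
satisfies `|C| > γ · (1 + |N_i(g) \ C|)`. -/
def CNVul {V : Type*} [Fintype V] [DecidableEq V] (g : SimpleGraph V) (γ : ℝ) (i : V) :
    Prop :=
  ∃ C : Finset V, g.IsClique ↑C ∧ i ∉ C ∧
    γ * (1 + ((nbrs g i) \ C).card) < (C.card : ℝ)

/-- CN-war-stability: (S1) no country CN-vulnerable; (S2) no country CN-vulnerable after
adding any non-link; (S3) both endpoints of any link become CN-vulnerable upon its
deletion. -/
def CNWarStable {V : Type*} [Fintype V] [DecidableEq V] (g : SimpleGraph V) (γ : ℝ) :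
    Prop :=
  (∀ v : V, ¬ CNVul g γ v) ∧
  (∀ j k : V, j ≠ k → ¬ g.Adj j k → ∀ v : V, ¬ CNVul (addE g j k) γ v) ∧
  (∀ j k : V, g.Adj j k → CNVul (delE g j k) γ j ∧ CNVul (delE g j k) γ k)

section

variable {V : Type*}

lemma le_addE (g : SimpleGraph V) (i k : V) : g ≤ addE g i k := le_sup_left

lemma addE_adj {g : SimpleGraph V} {i k a b : V} :
    (addE g i k).Adj a b ↔ g.Adj a b ∨ a ≠ b ∧ (a = i ∧ b = k ∨ a = k ∧ b = i) := by
  simp only [addE, SimpleGraph.sup_adj, SimpleGraph.fromEdgeSet_adj, Set.mem_singleton_iff,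
    Sym2.eq_iff]
  tauto

lemma addE_adj_self (g : SimpleGraph V) {i k : V} (hik : i ≠ k) : (addE g i k).Adj i k :=
  addE_adj.mpr <| .inr ⟨hik, .inl ⟨rfl, rfl⟩⟩

variable [Fintype V]

@[simp]
lemma mem_nbrs {g : SimpleGraph V} {i v : V} : v ∈ nbrs g i ↔ g.Adj i v := by
  simp [nbrs]

lemma nbrs_addE_of_ne {g : SimpleGraph V} {i k u : V} (hui : u ≠ i) (huk : u ≠ k) :
    nbrs (addE g i k) u = nbrs g u := by
  ext w
  simp only [mem_nbrs, addE_adj]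
  grind

variable [DecidableEq V]

lemma isClique_addE_insert {g : SimpleGraph V} {i k : V} {s : Finset V} (hs : g.IsClique ↑s)
    (hsi : s ⊆ insert k (nbrs g i)) : (addE g i k).IsClique ↑(insert i s) := by
  rw [coe_insert]
  refine (hs.mono (le_addE g i k)).insert fun b hb hib => ?_
  rcases mem_insert.mp (hsi hb) with rfl | hbi
  · exact addE_adj_self g hib
  · exact le_addE g i k (mem_nbrs.mp hbi)

lemma nbrs_delE_self (g : SimpleGraph V) (i j : V) : nbrs (delE g i j) i = (nbrs g i).erase j := by
  ext w
  simp only [mem_nbrs, delE, SimpleGraph.deleteEdges_adj, Set.mem_singleton_iff,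
    Sym2.congr_right, mem_erase]
  tauto

lemma card_nbrs_sdiff_le_delE (g : SimpleGraph V) (i j : V) (C : Finset V) :
    #(nbrs g i \ C) ≤ 1 + #(nbrs (delE g i j) i \ C) := by
  rw [nbrs_delE_self, erase_sdiff_comm]
  have := pred_card_le_card_erase (s := nbrs g i \ C) (a := j)
  omega

section Vulnerability

variable {g : SimpleGraph V} {γ : ℝ}

lemma card_le_of_not_CNVul {v : V} (h : ¬CNVul g γ v) {D : Finset V} (hD : g.IsClique ↑D)
    (hvD : v ∉ D) : (#D : ℝ) ≤ γ * (1 + #(nbrs g v) - #(D ∩ nbrs g v)) := by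
  have hsplit : #(nbrs g v \ D) + #(D ∩ nbrs g v) = #(nbrs g v) := by
    rw [inter_comm]
    exact card_sdiff_add_card_inter _ _
  have hle : (#D : ℝ) ≤ γ * (1 + #(nbrs g v \ D)) := not_lt.mp fun hlt => h ⟨D, hD, hvD, hlt⟩
  rw [← hsplit, Nat.cast_add]
  linarith

lemma card_le_of_not_CNVul_of_subset {v : V} (h : ¬CNVul g γ v) {D : Finset V}
    (hD : g.IsClique ↑D) (hvD : v ∉ D) (hDv : D ⊆ nbrs g v) :
    (#D : ℝ) ≤ γ * (1 + #(nbrs g v) - #D) := by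
  simpa only [inter_eq_left.mpr hDv] using card_le_of_not_CNVul h hD hvD

lemma card_le_ceil_of_not_CNVul (hγ : 0 ≤ γ) {i : V} (h : ¬CNVul g γ i) {D : Finset V}
    (hD : g.IsClique ↑D) (hiD : i ∉ D) (hDi : D ⊆ nbrs g i) :
    (#D : ℤ) ≤ ⌈γ * (#(nbrs g i) : ℝ) / (1 + γ)⌉ := by
  have := card_le_of_not_CNVul_of_subset h hD hiD hDi
  rw [Int.le_ceil_iff, lt_div_iff₀ (by linarith)]
  push_cast
  nlinarith

end Vulnerability

section Stability

variable {g : SimpleGraph V} {γ : ℝ} {i k : V} {C : Finset V}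

lemma false_of_sdiff_nbrs_eq_singleton (hS2 : ∀ v, ¬CNVul (addE g i k) γ v)
    (hmax : ∀ v, #(nbrs g v) ≤ #(nbrs g i)) (hγ : 1 ≤ γ) (hd : (nbrs g i).Nonempty)
    (hC : g.IsClique ↑C) (hiC : i ∉ C) (hkC : k ∈ C) (hkN : k ∉ nbrs g i)
    (hout : ∀ w ∈ C, w ∉ nbrs g i → w = k) (hkey : γ * #(nbrs g i \ C) < #C) : False := by
  have hsplit := card_sdiff_add_card_inter (nbrs g i) C
  have hinter : #(nbrs g i ∩ C) + 1 ≤ #C := by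
    have : nbrs g i ∩ C ⊆ C.erase k := fun w hw =>
      mem_erase.mpr ⟨ne_of_mem_of_not_mem (mem_inter.mp hw).1 hkN, (mem_inter.mp hw).2⟩
    have := card_le_card this
    rw [card_erase_of_mem hkC] at this
    have := card_pos.mpr ⟨k, hkC⟩
    omega
  have hb : (1 + #(nbrs g i) : ℝ) ≤ #(nbrs g i \ C) + #C := by exact_mod_cast (by omega)
  obtain ⟨u, hu⟩ : (C.erase k).Nonempty := by
    rw [← card_pos, card_erase_of_mem hkC]
    by_contra! hc
    have : (1 : ℝ) ≤ #(nbrs g i \ C) := by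
      have := card_pos.mpr hd
      exact_mod_cast (by omega)
    have : (#C : ℝ) ≤ 1 := by exact_mod_cast (by omega)
    nlinarith
  obtain ⟨huk, huC⟩ := mem_erase.mp hu
  have huN : u ∈ nbrs g i := by_contra fun h => huk (hout u huC h)
  have hui : u ≠ i := ne_of_mem_of_not_mem huC hiC
  have hD : (addE g i k).IsClique ↑(insert i (C.erase u)) :=
    isClique_addE_insert (hC.subset (by simp)) fun w hw =>
      (em (w ∈ nbrs g i)).elim (mem_insert_of_mem ·) fun h =>
        mem_insert.mpr (.inl (hout w (mem_of_mem_erase hw) h))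
  have huD : u ∉ insert i (C.erase u) := by simp [hui]
  have hDu : insert i (C.erase u) ⊆ nbrs g u := by
    intro w hw
    rcases mem_insert.mp hw with rfl | hw
    · exact mem_nbrs.mpr (mem_nbrs.mp huN).symm
    · exact mem_nbrs.mpr (hC huC (mem_of_mem_erase hw) (ne_of_mem_erase hw).symm)
  have hDcard : #(insert i (C.erase u)) = #C := by
    rw [card_insert_of_notMem fun h => hiC (mem_of_mem_erase h), card_erase_add_one huC]
  have hNu := nbrs_addE_of_ne (k := k) (g := g) hui (ne_of_mem_of_not_mem huN hkN)
  have hvul := card_le_of_not_CNVul_of_subset (hS2 u) hD huD (hNu ▸ hDu)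
  rw [hNu, hDcard] at hvul
  have hdu : (#(nbrs g u) : ℝ) ≤ #(nbrs g i) := by exact_mod_cast hmax u
  nlinarith

lemma false_of_two_mem_sdiff_nbrs (hS1 : ∀ v, ¬CNVul g γ v) (hS2 : ∀ v, ¬CNVul (addE g i k) γ v)
    (hmax : ∀ v, #(nbrs g v) ≤ #(nbrs g i)) (hγ : 1 ≤ γ) {v : V} (hC : g.IsClique ↑C)
    (hiC : i ∉ C) (hkC : k ∈ C) (hkN : k ∉ nbrs g i) (hvC : v ∈ C) (hvN : v ∉ nbrs g i)
    (hvk : v ≠ k) (hkey : γ * #(nbrs g i \ C) < #C) : False := by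
  set A := C ∩ nbrs g i
  have hvi : v ≠ i := ne_of_mem_of_not_mem hvC hiC
  have hik : i ≠ k := fun h => hiC (h ▸ hkC)
  have hiv : ¬g.Adj v i := fun h => hvN (mem_nbrs.mpr h.symm)
  have hkA : k ∉ A := fun h => hkN (mem_inter.mp h).2
  have hAC : insert k A ⊆ C := insert_subset hkC inter_subset_left
  have hD : (addE g i k).IsClique ↑(insert i (insert k A)) :=
    isClique_addE_insert (hC.subset (coe_subset.mpr hAC))
      (insert_subset_insert k inter_subset_right)
  have hvD : v ∉ insert i (insert k A) := by simp [A, hvi, hvk, hvN]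
  have hDv : insert i (insert k A) ∩ nbrs g v = insert k A := by
    rw [insert_inter_of_notMem (by simpa using hiv), inter_eq_left]
    exact fun w hw => mem_nbrs.mpr (hC hvC (hAC hw) fun h => hvD (h ▸ mem_insert_of_mem hw))
  have hDcard : #(insert i (insert k A)) = #A + 2 := by
    rw [card_insert_of_notMem (by simp [A, hiC, hik]), card_insert_of_notMem hkA]
  have hvul := card_le_of_not_CNVul (hS2 v) hD hvD
  rw [nbrs_addE_of_ne hvi hvk, hDv, hDcard, card_insert_of_notMem hkA] at hvul
  have hCv := card_le_of_not_CNVul_of_subset (hS1 v) (hC.subset (by simp)) (notMem_erase v C)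
    fun w hw => mem_nbrs.mpr (hC hvC (mem_of_mem_erase hw) (ne_of_mem_erase hw).symm)
  rw [card_erase_of_mem hvC, Nat.cast_sub (card_pos.mpr ⟨v, hvC⟩)] at hCv
  have hsplit : #(nbrs g i \ C) + #A = #(nbrs g i) := by
    rw [← card_sdiff_add_card_inter (nbrs g i) C, inter_comm]
  have hdv : (#(nbrs g v) : ℝ) ≤ #(nbrs g i) := by exact_mod_cast hmax v
  have hsplit' : (#(nbrs g i \ C) : ℝ) + #A = #(nbrs g i) := by exact_mod_cast hsplit
  push_cast at hvul hCv
  have h3 : #A + 3 ≤ #C := by exact_mod_cast (show (#A : ℝ) + 2 < #C by nlinarith)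
  have h3' : (#A : ℝ) + 3 ≤ #C := by exact_mod_cast h3
  nlinarith

theorem subset_nbrs_of_stable (hS1 : ∀ v, ¬CNVul g γ v)
    (hS2 : ∀ j k : V, j ≠ k → ¬g.Adj j k → ∀ v, ¬CNVul (addE g j k) γ v)
    (hmax : ∀ v, #(nbrs g v) ≤ #(nbrs g i)) (hγ : 1 ≤ γ) (hd : (nbrs g i).Nonempty)
    (hC : g.IsClique ↑C) (hiC : i ∉ C) (hkey : γ * #(nbrs g i \ C) < #C) : C ⊆ nbrs g i := by
  intro k hkC
  by_contra hkN
  have hS2k := hS2 i k (ne_of_mem_of_not_mem hkC hiC).symm fun h => hkN (mem_nbrs.mpr h)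
  by_cases hout : ∀ w ∈ C, w ∉ nbrs g i → w = k
  · exact false_of_sdiff_nbrs_eq_singleton hS2k hmax hγ hd hC hiC hkC hkN hout hkey
  · push Not at hout
    obtain ⟨v, hvC, hvN, hvk⟩ := hout
    exact false_of_two_mem_sdiff_nbrs hS1 hS2k hmax hγ hC hiC hkC hkN hvC hvN hvk hkey

end Stability

end

theorem claim_two_general {n : ℕ} (γ : ℝ) (hγ : 1 ≤ γ)
    (g : SimpleGraph (Fin n)) (hstable : CNWarStable g γ)
    (i j : Fin n) (hmax : ∀ v : Fin n, (nbrs g v).card ≤ (nbrs g i).card)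
    (hij : g.Adj i j)
    (C : Finset (Fin n)) (hclique : (delE g i j).IsClique ↑C) (hiC : i ∉ C)
    (hwin : γ * (1 + ((nbrs (delE g i j) i) \ C).card) < (C.card : ℝ)) :
    C ⊆ nbrs g i ∧
    (C.card : ℤ) = ⌈γ * ((nbrs g i).card : ℝ) / (1 + γ)⌉ ∧
    γ * ((nbrs g i).card : ℝ) / (1 + γ) < (C.card : ℝ) ∧
    ∀ C' : Finset (Fin n), g.IsClique ↑C' → i ∉ C' →
      ((C' ∩ nbrs g i).card : ℤ) ≤ ⌈γ * ((nbrs g i).card : ℝ) / (1 + γ)⌉ := by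
  obtain ⟨hS1, hS2, -⟩ := hstable
  have hγ0 : 0 ≤ γ := zero_le_one.trans hγ
  have hC : g.IsClique ↑C := hclique.mono (SimpleGraph.deleteEdges_le _)
  have hkey : γ * #(nbrs g i \ C) < #C :=
    calc γ * #(nbrs g i \ C) ≤ γ * (1 + #(nbrs (delE g i j) i \ C)) := by
          gcongr
          exact_mod_cast card_nbrs_sdiff_le_delE g i j C
      _ < #C := hwin
  have hsub := subset_nbrs_of_stable hS1 hS2 hmax hγ ⟨j, mem_nbrs.mpr hij⟩ hC hiC hkey
  have hlt : γ * (#(nbrs g i) : ℝ) / (1 + γ) < #C := by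
    rw [card_sdiff_of_subset hsub, Nat.cast_sub (card_le_card hsub)] at hkey
    rw [div_lt_iff₀ (by linarith)]
    linarith
  have hle {D : Finset (Fin n)} (hD : g.IsClique ↑D) (hiD : i ∉ D) (hDi : D ⊆ nbrs g i) :=
    card_le_ceil_of_not_CNVul hγ0 (hS1 i) hD hiD hDi
  refine ⟨hsub, le_antisymm (hle hC hiC hsub) (Int.ceil_le.mpr (by exact_mod_cast hlt.le)), hlt,
    fun C' hC' hiC' => hle (hC'.subset (by simp)) (fun h => hiC' (mem_inter.mp h).1)
      inter_subset_right⟩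

/-- Claim 2: if `g` is CN-war-stable, `i` has maximum degree `d_i`, `ij ∈ g`,
and `C` is a clique of `g - ij` witnessing `i`'s CN-vulnerability there, then
`C ⊆ N_i(g)`, `|C| = ⌈γ d_i/(1+γ)⌉`, and `|C| > γ d_i/(1+γ)`; moreover any clique `C'`
of `g` with `i ∉ C'` has `|C' ∩ N_i(g)| ≤ ⌈γ d_i/(1+γ)⌉`. -/
theorem claim_two {n : ℕ} (hn : 3 ≤ n) (γ : ℝ) (hγ : 1 ≤ γ)
    (g : SimpleGraph (Fin n)) (hstable : CNWarStable g γ)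
    (i j : Fin n) (hmax : ∀ v : Fin n, (nbrs g v).card ≤ (nbrs g i).card)
    (hij : g.Adj i j)
    (C : Finset (Fin n)) (hclique : (delE g i j).IsClique ↑C) (hiC : i ∉ C)
    (hwin : γ * (1 + ((nbrs (delE g i j) i) \ C).card) < (C.card : ℝ)) :
    C ⊆ nbrs g i ∧
    (C.card : ℤ) = ⌈γ * ((nbrs g i).card : ℝ) / (1 + γ)⌉ ∧
    γ * ((nbrs g i).card : ℝ) / (1 + γ) < (C.card : ℝ) ∧
    ∀ C' : Finset (Fin n), g.IsClique ↑C' → i ∉ C' →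
      ((C' ∩ nbrs g i).card : ℤ) ≤ ⌈γ * ((nbrs g i).card : ℝ) / (1 + γ)⌉ :=
  claim_two_general γ hγ g hstable i j hmax hij C hclique hiC hwin
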